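/- Under the prior π(γ) = B(|γ|+1, p+q−|γ|+1) / 2^{#{j : γ_j^x > 0}}, for each fixed index k with 1 ≤ k ≤ q, the marginal probabilities satisfy Pr(γ_k^z = 0) = Pr(γ_k^z = 1) = 1/2; that is, the sum of π(γ) over all configurations γ with γ_k^z = 0 equals 1/2, and the sum over all configurations with γ_k^z = 1 equals 1/2. -/

import Mathlib

/-! The prior is a mixture over `t ∈ [0,1]`: since `B(a+1, b+1) = ∫₀¹ tᵃ (1-t)ᵇ dt`, the prior of
`γ` is the integral of a product of per-coordinate weights, `t/2` or `1 - t` for an `x`-coordinate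
and `t` or `1 - t` for a `z`-coordinate. For fixed `t` the weights of each coordinate sum to `1`, so
summing over all coordinates but `γₖᶻ = c` leaves the weight of `c`, whose integral is `1/2`. -/

open Finset

/-- The Beta function `B(a,b) = ∫₀¹ t^(a-1) (1-t)^(b-1) dt`. -/
noncomputable def Beta (a b : ℝ) : ℝ :=
  ∫ t in (0:ℝ)..1, t ^ (a - 1) * (1 - t) ^ (b - 1)

/-- Number of active (nonzero) components of `γˣ`, i.e. `#{j : γⱼˣ > 0}`. -/
def nActive {p : ℕ} (γx : Fin p → Fin 3) : ℕ :=
  (univ.filter fun j => 0 < (γx j : ℕ)).card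

/-- The number of included predictors `|γ| = #{j : γⱼˣ > 0} + ∑ₖ γₖᶻ`. -/
def gammaSize {p q : ℕ} (γ : (Fin p → Fin 3) × (Fin q → Fin 2)) : ℕ :=
  nActive γ.1 + ∑ k, (γ.2 k : ℕ)

/-- The prior `π(γ) = B(|γ|+1, p+q-|γ|+1) / 2^{#{j : γⱼˣ > 0}}`. -/
noncomputable def prior (p q : ℕ) (γ : (Fin p → Fin 3) × (Fin q → Fin 2)) : ℝ :=
  Beta ((gammaSize γ : ℝ) + 1) ((p : ℝ) + (q : ℝ) - (gammaSize γ : ℝ) + 1) /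
    2 ^ nActive γ.1

section ProductWeights

variable {ι α R : Type*} [Fintype ι] [DecidableEq ι] [Fintype α] [CommSemiring R]

theorem sum_prod_apply_eq_one {f : α → R} (hf : ∑ a, f a = 1) :
    ∑ x : ι → α, ∏ i, f (x i) = 1 := by
  rw [← Fintype.prod_sum (fun _ => f)]
  simp [hf]

theorem sum_filter_prod_apply_eq [DecidableEq α] {f : α → R}
    (hf : ∑ a, f a = 1) (k : ι) (c : α) :
    ∑ x ∈ univ.filter (fun x : ι → α => x k = c), ∏ i, f (x i) = f c := by
  have hfilter : univ.filter (fun x : ι → α => x k = c) =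
      Fintype.piFinset (fun i => if i = k then {c} else univ) := by
    ext x
    simp only [mem_filter, mem_univ, true_and, Fintype.mem_piFinset]
    refine ⟨fun hx i => ?_, fun hx => by simpa using hx k⟩
    split_ifs with hi <;> simp [hi, hx]
  rw [hfilter, ← prod_univ_sum (fun i => if i = k then {c} else univ) (fun _ => f)]
  simp only [apply_ite (fun s : Finset α => ∑ j ∈ s, f j), sum_singleton, hf]
  simp

end ProductWeights

theorem prod_ite_eq_pow_mul_pow {ι M : Type*} [Fintype ι] [CommMonoid M] (P : ι → Prop)
    [DecidablePred P] (a b : M) :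
    ∏ i, (if P i then a else b) = a ^ #{i | P i} * b ^ #{i | ¬P i} := by
  rw [prod_ite, prod_const, prod_const]

theorem Beta_natCast_add_one (a b : ℕ) :
    Beta ((a : ℝ) + 1) ((b : ℝ) + 1) = ∫ t in (0 : ℝ)..1, t ^ a * (1 - t) ^ b := by
  simp only [Beta, add_sub_cancel_right, Real.rpow_natCast]

/-- `t / 2` carries the factor `1/2` that the prior attaches to each active `x`-coordinate. -/
noncomputable def xWeight (t : ℝ) (v : Fin 3) : ℝ := if 0 < (v : ℕ) then t / 2 else 1 - t

noncomputable def zWeight (t : ℝ) (v : Fin 2) : ℝ := if 0 < (v : ℕ) then t else 1 - t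

theorem sum_xWeight (t : ℝ) : ∑ v, xWeight t v = 1 := by
  rw [Fin.sum_univ_three]
  simp [xWeight]
  ring

theorem sum_zWeight (t : ℝ) : ∑ v, zWeight t v = 1 := by
  simp [zWeight]

theorem continuous_xWeight (v : Fin 3) : Continuous fun t => xWeight t v := by
  unfold xWeight
  split_ifs <;> fun_prop

theorem continuous_zWeight (v : Fin 2) : Continuous fun t => zWeight t v := by
  unfold zWeight
  split_ifs <;> fun_prop

theorem sum_val_eq_card_filter_pos {q : ℕ} (z : Fin q → Fin 2) :
    ∑ k, (z k : ℕ) = #{k | 0 < (z k : ℕ)} := by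
  rw [card_filter]
  refine sum_congr rfl fun k _ => ?_
  rcases Fin.exists_fin_two.mp ⟨z k, rfl⟩ with h | h <;> simp [h]

theorem prior_eq_integral (p q : ℕ) (γ : (Fin p → Fin 3) × (Fin q → Fin 2)) :
    prior p q γ = ∫ t in (0 : ℝ)..1, (∏ j, xWeight t (γ.1 j)) * ∏ k, zWeight t (γ.2 k) := by
  obtain ⟨x, z⟩ := γ
  have hp : #{j | 0 < (x j : ℕ)} + #{j | ¬0 < (x j : ℕ)} = p := by
    simpa using card_filter_add_card_filter_not (s := univ) (fun j => 0 < (x j : ℕ))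
  have hq : #{k | 0 < (z k : ℕ)} + #{k | ¬0 < (z k : ℕ)} = q := by
    simpa using card_filter_add_card_filter_not (s := univ) (fun k => 0 < (z k : ℕ))
  have hsize : gammaSize (x, z) = #{j | 0 < (x j : ℕ)} + #{k | 0 < (z k : ℕ)} := by
    rw [gammaSize, nActive, sum_val_eq_card_filter_pos]
  have hBeta : (p : ℝ) + q - (gammaSize (x, z) : ℕ) + 1 =
      (#{j | ¬0 < (x j : ℕ)} + #{k | ¬0 < (z k : ℕ)} : ℕ) + 1 := by
    have hpq : ((#{j | 0 < (x j : ℕ)} + #{j | ¬0 < (x j : ℕ)} : ℕ) : ℝ) +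
        (#{k | 0 < (z k : ℕ)} + #{k | ¬0 < (z k : ℕ)} : ℕ) = p + q := by rw [hp, hq]
    rw [hsize]
    push_cast at hpq ⊢
    linarith
  rw [prior, hBeta, hsize, Beta_natCast_add_one, ← intervalIntegral.integral_div]
  refine intervalIntegral.integral_congr fun t _ => ?_
  simp only [xWeight, zWeight, prod_ite_eq_pow_mul_pow, nActive]
  rw [div_pow]
  ring

theorem sum_filter_prod_weights (p q : ℕ) (k : Fin q) (c : Fin 2) (t : ℝ) :
    ∑ γ ∈ univ.filter (fun γ : (Fin p → Fin 3) × (Fin q → Fin 2) => γ.2 k = c),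
      (∏ j, xWeight t (γ.1 j)) * ∏ k, zWeight t (γ.2 k) = zWeight t c := by
  rw [← univ_product_univ, filter_product_right (fun z : Fin q → Fin 2 => z k = c), sum_product]
  dsimp only
  rw [← sum_mul_sum, sum_prod_apply_eq_one (sum_xWeight t),
    sum_filter_prod_apply_eq (sum_zWeight t), one_mul]

theorem intervalIntegrable_prod_weights {p q : ℕ} (γ : (Fin p → Fin 3) × (Fin q → Fin 2))
    (a b : ℝ) :
    IntervalIntegrable (fun t => (∏ j, xWeight t (γ.1 j)) * ∏ k, zWeight t (γ.2 k))
      MeasureTheory.volume a b :=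
  ((continuous_finsetProd _ fun j _ => continuous_xWeight (γ.1 j)).mul
    (continuous_finsetProd _ fun k _ => continuous_zWeight (γ.2 k))).intervalIntegrable a b

theorem sum_prior_filter_eq_integral (p q : ℕ) (k : Fin q) (c : Fin 2) :
    ∑ γ ∈ univ.filter (fun γ : (Fin p → Fin 3) × (Fin q → Fin 2) => γ.2 k = c), prior p q γ =
      ∫ t in (0 : ℝ)..1, zWeight t c := by
  simp only [prior_eq_integral]
  rw [← intervalIntegral.integral_finsetSum fun γ _ => intervalIntegrable_prod_weights γ 0 1]
  exact intervalIntegral.integral_congr fun t _ => sum_filter_prod_weights p q k c t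

theorem integral_zWeight (c : Fin 2) : ∫ t in (0 : ℝ)..1, zWeight t c = 1 / 2 := by
  fin_cases c
  · simp only [zWeight, lt_self_iff_false, if_false]
    rw [intervalIntegral.integral_sub intervalIntegrable_const
      intervalIntegral.intervalIntegrable_id]
    norm_num [integral_id]
  · norm_num [zWeight, integral_id]

theorem prior_marginal_z_general (p q : ℕ) (k : Fin q) :
    (∑ γ ∈ univ.filter (fun γ : (Fin p → Fin 3) × (Fin q → Fin 2) => γ.2 k = 0),
      prior p q γ = 1 / 2) ∧
    (∑ γ ∈ univ.filter (fun γ : (Fin p → Fin 3) × (Fin q → Fin 2) => γ.2 k = 1),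
      prior p q γ = 1 / 2) := by
  simp only [sum_prior_filter_eq_integral, integral_zWeight, and_self]

/-- For each fixed index `k`, the marginal probabilities satisfy
`Pr(γₖᶻ = 0) = Pr(γₖᶻ = 1) = 1/2`. -/
theorem prior_marginal_z (p q : ℕ) (hq : 1 ≤ q) (k : Fin q) :
    (∑ γ ∈ univ.filter (fun γ : (Fin p → Fin 3) × (Fin q → Fin 2) => γ.2 k = 0),
      prior p q γ = 1 / 2) ∧
    (∑ γ ∈ univ.filter (fun γ : (Fin p → Fin 3) × (Fin q → Fin 2) => γ.2 k = 1),
      prior p q γ = 1 / 2) :=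
  prior_marginal_z_general p q k
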